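/- Let P_R ⊂ Γ^d = {(η, η², ..., η^d) : η ∈ [0,1]} with |P_R| ≥ c R^{2d/p}, and suppose (1/R^d)∫_{[0,R]^d}|∑_{ξ∈P_R} a_ξ e(ξ·x)|^p dx ≤ C‖a_ξ‖_{ℓ²}^p for all complex a_ξ, with constants independent of R. Then p ≥ d(d+1). -/

import Mathlib

open MeasureTheory Complex

noncomputable def e (z : ℝ) : ℂ := Complex.exp (2 * Real.pi * Complex.I * z)

/-!
Suppose `p < d (d + 1)` and take `R = N ^ d`. By pigeonholing, an arc `[η₀, η₀ + 1 / N]` of the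
moment curve carries a set `τ ⊆ P_R` of `≳ N ^ (2 d² / p - 1)` frequencies. Re-centring the curve
at `η₀` (a unipotent Taylor-shift change of variables) shows that the phases `γ(η) ⬝ᵥ x`, `η ∈ τ`,
lie within `1 / 6` of a common phase on a translate of the polar box `{y : |(A y)ⱼ| ≲ N ^ (j + 1)}`, which has volume
`≳ N ^ (d (d + 1) / 2)` and fits in `[0, R] ^ d`. Testing the inequality with the (modulated)
indicator of `τ` then gives `N ^ ((d (d + 1) - p) / 2) ≲ 1`, which fails for large `N`.
-/

open Finset Matrix Filter

lemma e_eq_exp (z : ℝ) : e z = exp (↑(2 * Real.pi * z) * I) := by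
  rw [e]; push_cast; ring_nf

lemma e_add (a b : ℝ) : e (a + b) = e a * e b := by
  simp only [e_eq_exp, ← Complex.exp_add]; push_cast; ring_nf

lemma norm_e (z : ℝ) : ‖e z‖ = 1 := by
  rw [e_eq_exp, norm_exp_ofReal_mul_I]

lemma continuous_e : Continuous e := by
  unfold e; fun_prop

lemma one_half_le_re_e {z : ℝ} (hz : |z| ≤ 1 / 6) : 1 / 2 ≤ (e z).re := by
  have harg : |2 * Real.pi * z| ≤ Real.pi / 3 := by
    rw [abs_mul, abs_of_pos Real.two_pi_pos]; nlinarith [Real.pi_pos]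
  rw [e_eq_exp, exp_ofReal_mul_I_re, ← Real.cos_abs, ← Real.cos_pi_div_three]
  exact Real.cos_le_cos_of_nonneg_of_le_pi (abs_nonneg _) (by linarith [Real.pi_pos]) harg

lemma card_div_two_le_norm_sum_e {ι : Type*} (τ : Finset ι) (ψ : ℝ) (θ : ι → ℝ)
    (hθ : ∀ i ∈ τ, |θ i| ≤ 1 / 6) : (#τ : ℝ) / 2 ≤ ‖∑ i ∈ τ, e (ψ + θ i)‖ := by
  simp only [e_add, ← mul_sum, norm_mul, norm_e, one_mul]
  calc (#τ : ℝ) / 2 = ∑ _i ∈ τ, (1 / 2 : ℝ) := by rw [sum_const, nsmul_eq_mul]; ring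
    _ ≤ ∑ i ∈ τ, (e (θ i)).re := sum_le_sum fun i hi => one_half_le_re_e (hθ i hi)
    _ = (∑ i ∈ τ, e (θ i)).re := (re_sum _ _).symm
    _ ≤ ‖∑ i ∈ τ, e (θ i)‖ := re_le_norm _

lemma exists_Icc_card_filter_ge (P : Finset ℝ) (hP : ∀ η ∈ P, η ∈ Set.Icc (0 : ℝ) 1) {N : ℕ}
    (hN : 0 < N) :
    ∃ η₀ ∈ Set.Icc (0 : ℝ) 1, (#P : ℝ) / N ≤ #{η ∈ P | η ∈ Set.Icc η₀ (η₀ + 1 / N)} := by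
  have hN' : (0 : ℝ) < N := by exact_mod_cast hN
  obtain ⟨i, hi, hcard⟩ := exists_le_card_fiber_of_nsmul_le_card_of_maps_to
    (s := P) (f := fun η => min ⌊η * N⌋₊ (N - 1))
    (t := range N) (b := (#P : ℝ) / N)
    (fun η _ => mem_range.2 ((min_le_right _ _).trans_lt (by omega)))
    ⟨0, mem_range.2 hN⟩ (by rw [card_range, nsmul_eq_mul, mul_div_cancel₀ _ hN'.ne'])
  have hi : i < N := mem_range.1 hi
  refine ⟨i / N, ⟨by positivity, div_le_one_of_le₀ (by exact_mod_cast hi.le) hN'.le⟩,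
    hcard.trans ?_⟩
  gcongr with η hη
  intro (hbin : min ⌊η * N⌋₊ (N - 1) = i)
  obtain ⟨h0, h1⟩ := hP η hη
  have hfloor := Nat.floor_le (mul_nonneg h0 hN'.le)
  have hfloor' := Nat.lt_floor_add_one (η * N)
  rw [Set.mem_Icc, ← add_div, div_le_iff₀ hN', le_div_iff₀ hN']
  rcases le_total ⌊η * N⌋₊ (N - 1) with h | h
  · have : i = ⌊η * N⌋₊ := by omega
    subst this; exact ⟨hfloor, hfloor'.le⟩
  · have : i = N - 1 := by omega
    have hcast : (i : ℝ) + 1 = N := by rw [this]; exact_mod_cast Nat.sub_add_cancel hN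
    have : (N : ℝ) ≤ ⌊η * N⌋₊ + 1 := by exact_mod_cast (by omega : N ≤ ⌊η * N⌋₊ + 1)
    constructor <;> nlinarith

def momentCurve (d : ℕ) (η : ℝ) : Fin d → ℝ := fun k => η ^ (k.1 + 1)

/-- `(taylorShift d η₀ *ᵥ x) j` is the `(j + 1)`-st Taylor coefficient at `η₀` of
`η ↦ momentCurve d η ⬝ᵥ x`. -/
def taylorShift (d : ℕ) (η₀ : ℝ) : Matrix (Fin d) (Fin d) ℝ :=
  fun j k => ((k.1 + 1).choose (j.1 + 1) : ℝ) * η₀ ^ (k.1 - j.1)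

lemma momentCurve_add_dotProduct (d : ℕ) (η₀ t : ℝ) (x : Fin d → ℝ) :
    momentCurve d (η₀ + t) ⬝ᵥ x
      = momentCurve d η₀ ⬝ᵥ x + momentCurve d t ⬝ᵥ (taylorShift d η₀ *ᵥ x) := by
  simp only [dotProduct, Matrix.mulVec, momentCurve, taylorShift, mul_sum]
  rw [sum_comm, ← sum_add_distrib]
  refine sum_congr rfl fun k _ => ?_
  have hbinom : (η₀ + t) ^ (k.1 + 1)
      = η₀ ^ (k.1 + 1)
        + ∑ j ∈ range (k.1 + 1), t ^ (j + 1) * η₀ ^ (k.1 - j) * (k.1 + 1).choose (j + 1) := by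
    rw [add_comm η₀, add_pow, sum_range_succ']
    simp only [pow_zero, one_mul, Nat.choose_zero_right, Nat.cast_one, mul_one, Nat.sub_zero,
      Nat.add_sub_add_right]
    ring
  rw [hbinom, add_mul, sum_mul]
  congr 1
  rw [Fin.sum_univ_eq_sum_range (fun j => t ^ (j + 1) * ((((k.1 + 1).choose (j + 1)) : ℝ)
    * η₀ ^ (k.1 - j) * x k)), ← sum_subset (range_subset_range.2 k.2)]
  · exact sum_congr rfl fun j _ => by ring
  · intro j _ hj
    rw [Nat.choose_eq_zero_of_lt (by simp only [mem_range, not_lt] at hj; omega)]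
    simp

lemma taylorShift_isUpperTriangular (d : ℕ) (η₀ : ℝ) : (taylorShift d η₀).IsUpperTriangular :=
  fun j k (hkj : k < j) => by
    simp [taylorShift, Nat.choose_eq_zero_of_lt (Nat.succ_lt_succ (Fin.lt_def.1 hkj))]

lemma taylorShift_apply_self (d : ℕ) (η₀ : ℝ) (j : Fin d) : taylorShift d η₀ j j = 1 := by
  simp [taylorShift]

lemma det_taylorShift (d : ℕ) (η₀ : ℝ) : (taylorShift d η₀).det = 1 := by
  rw [Matrix.det_of_isUpperTriangular (taylorShift_isUpperTriangular d η₀)]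
  simp [taylorShift_apply_self]

lemma abs_taylorShift_le {d : ℕ} {η₀ : ℝ} (hη₀ : η₀ ∈ Set.Icc (0 : ℝ) 1) (j k : Fin d) :
    |taylorShift d η₀ j k| ≤ 2 ^ d := by
  rw [taylorShift, abs_mul, abs_of_nonneg (by positivity), abs_of_nonneg (pow_nonneg hη₀.1 _)]
  calc ((k.1 + 1).choose (j.1 + 1) : ℝ) * η₀ ^ (k.1 - j.1) ≤ 2 ^ (k.1 + 1) * 1 := by
        gcongr
        · exact pow_nonneg hη₀.1 _
        · exact_mod_cast Nat.choose_le_two_pow _ _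
        · exact pow_le_one₀ hη₀.1 hη₀.2
    _ ≤ 2 ^ d := by rw [mul_one]; exact pow_le_pow_right₀ one_le_two k.2

lemma abs_le_of_abs_mulVec_le {d : ℕ} {A : Matrix (Fin d) (Fin d) ℝ} (hA : A.IsUpperTriangular)
    (hdiag : ∀ i, A i i = 1) {B ε : ℝ} (hB : ∀ i j, |A i j| ≤ B) {y : Fin d → ℝ}
    (hy : ∀ j, |(A *ᵥ y) j| ≤ ε) (k : Fin d) : |y k| ≤ (d * B + 1) ^ d * ε := by
  have hB0 : 0 ≤ B := (abs_nonneg _).trans (hB k k)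
  have hε0 : 0 ≤ ε := (abs_nonneg _).trans (hy k)
  -- Back substitution: `y k = (A y) k - ∑_{m > k} A k m * y m`.
  suffices h : ∀ n : ℕ, ∀ k : Fin d, d ≤ k.1 + n → |y k| ≤ (d * B + 1) ^ n * ε from h d k (by omega)
  intro n
  induction n with
  | zero => exact fun k hk => absurd k.2 (by omega)
  | succ n ih =>
    intro k hk
    have hsplit : y k = (A *ᵥ y) k - ∑ m ∈ univ.erase k, A k m * y m := by
      rw [mulVec, dotProduct, ← add_sum_erase _ _ (mem_univ k), hdiag]; ring
    have hterm : ∀ m ∈ univ.erase k, |A k m * y m| ≤ B * ((d * B + 1) ^ n * ε) := by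
      intro m _
      rcases lt_or_ge m k with hmk | hkm
      · rw [hA hmk, zero_mul, abs_zero]; positivity
      · rw [abs_mul]
        exact mul_le_mul (hB k m) (ih m (by have := (mem_erase.1 ‹_›).1; omega)) (abs_nonneg _) hB0
    calc |y k| ≤ ε + ∑ m ∈ univ.erase k, B * ((d * B + 1) ^ n * ε) := by
          rw [hsplit]
          exact (abs_sub _ _).trans (add_le_add (hy k) ((abs_sum_le_sum_abs _ _).trans
            (sum_le_sum hterm)))
      _ ≤ ε + d * (B * ((d * B + 1) ^ n * ε)) := by
          rw [sum_const, nsmul_eq_mul]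
          gcongr
          exact_mod_cast (card_erase_le).trans (card_fin d).le
      _ ≤ (d * B + 1) ^ (n + 1) * ε := by
          have : 1 ≤ (d * B + 1 : ℝ) ^ n := one_le_pow₀ (by nlinarith [d.cast_nonneg (α := ℝ)])
          rw [pow_succ]; nlinarith [mul_nonneg (d.cast_nonneg (α := ℝ)) hB0]

def polarBox (d : ℕ) (η₀ : ℝ) (δ : Fin d → ℝ) : Set (Fin d → ℝ) :=
  (taylorShift d η₀ *ᵥ ·) ⁻¹' Set.univ.pi fun j => Set.Icc (-δ j) (δ j)

lemma measurableSet_polarBox (d : ℕ) (η₀ : ℝ) (δ : Fin d → ℝ) :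
    MeasurableSet (polarBox d η₀ δ) :=
  (Continuous.matrix_mulVec continuous_const continuous_id).measurable
    (MeasurableSet.univ_pi fun _ => measurableSet_Icc)

lemma volume_polarBox (d : ℕ) (η₀ : ℝ) (δ : Fin d → ℝ) :
    volume (polarBox d η₀ δ) = ∏ j, ENNReal.ofReal (2 * δ j) := by
  have hdet : LinearMap.det (toLin' (taylorShift d η₀)) = 1 := by
    rw [LinearMap.det_toLin', det_taylorShift]
  change volume (toLin' (taylorShift d η₀) ⁻¹' _) = _
  rw [Measure.addHaar_preimage_linearMap _ (by rw [hdet]; exact one_ne_zero),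
    hdet, volume_pi_pi]
  simp only [inv_one, abs_one, ENNReal.ofReal_one, one_mul, Real.volume_Icc, sub_neg_eq_add,
    two_mul]

lemma abs_le_of_mem_polarBox {d : ℕ} {η₀ r : ℝ} (hη₀ : η₀ ∈ Set.Icc (0 : ℝ) 1) {δ : Fin d → ℝ}
    (hδ : ∀ j, δ j ≤ r) {y : Fin d → ℝ} (hy : y ∈ polarBox d η₀ δ) (k : Fin d) :
    |y k| ≤ (d * 2 ^ d + 1) ^ d * r :=
  abs_le_of_abs_mulVec_le (taylorShift_isUpperTriangular d η₀) (taylorShift_apply_self d η₀)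
    (abs_taylorShift_le hη₀) (fun j => abs_le.2 ((Set.mem_univ_pi.1 hy j).imp
      (fun h => (neg_le_neg (hδ j)).trans h) (fun h => h.trans (hδ j)))) k

lemma abs_momentCurve_dotProduct_le {d : ℕ} {t ρ κ : ℝ} (hκ : 0 ≤ κ) (hρ : 0 ≤ ρ)
    (ht : |t| * ρ ≤ 1) {z : Fin d → ℝ} (hz : ∀ j, |z j| ≤ κ * ρ ^ (j.1 + 1)) :
    |momentCurve d t ⬝ᵥ z| ≤ d * κ := by
  calc |momentCurve d t ⬝ᵥ z| ≤ ∑ j, |momentCurve d t j * z j| := abs_sum_le_sum_abs _ _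
    _ = ∑ j, |t| ^ (j.1 + 1) * |z j| := by simp only [momentCurve, abs_mul, abs_pow]
    _ ≤ ∑ _j : Fin d, κ := sum_le_sum fun j _ => by
        calc |t| ^ (j.1 + 1) * |z j| ≤ |t| ^ (j.1 + 1) * (κ * ρ ^ (j.1 + 1)) := by
              gcongr; exact hz j
          _ = κ * (|t| * ρ) ^ (j.1 + 1) := by ring
          _ ≤ κ * 1 := by gcongr; exact pow_le_one₀ (by positivity) ht
          _ = κ := mul_one κ
    _ = d * κ := by rw [sum_const, card_univ, Fintype.card_fin, nsmul_eq_mul]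

/-- Small enough that on the polar box the phase error `d * boxScale d` is at most `1 / 6`, and
that the box, recentred at the middle of the cube `[0, ρ ^ d] ^ d`, stays inside it. -/
noncomputable def boxScale (d : ℕ) : ℝ := (6 * d * (d * 2 ^ d + 1) ^ d)⁻¹

lemma boxScale_pos {d : ℕ} (hd : 1 ≤ d) : 0 < boxScale d := by
  have : (1 : ℝ) ≤ d := by exact_mod_cast hd
  unfold boxScale; positivity

lemma natCast_mul_boxScale_le {d : ℕ} (hd : 1 ≤ d) : d * boxScale d ≤ 1 / 6 := by
  have hd' : (1 : ℝ) ≤ d := by exact_mod_cast hd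
  have : (1 : ℝ) ≤ (d * 2 ^ d + 1) ^ d := one_le_pow₀ (by nlinarith [pow_pos two_pos (M₀ := ℝ) d])
  rw [boxScale]
  field_simp
  nlinarith

lemma pow_mul_boxScale_le {d : ℕ} (hd : 1 ≤ d) : (d * 2 ^ d + 1) ^ d * boxScale d ≤ 1 / 2 := by
  have hd' : (1 : ℝ) ≤ d := by exact_mod_cast hd
  rw [boxScale]
  field_simp
  nlinarith

lemma prod_pow_succ_eq_rpow (d : ℕ) (ρ : ℝ) :
    ∏ j : Fin d, ρ ^ (j.1 + 1) = ρ ^ ((d : ℝ) * (d + 1) / 2) := by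
  have hsum : (∑ j : Fin d, (j.1 + 1)) * 2 = d * (d + 1) := by
    have h := sum_range_id_mul_two (d + 1)
    rw [sum_range_succ'] at h
    simpa [Fin.sum_univ_eq_sum_range (· + 1), mul_comm] using h
  rw [prod_pow_eq_pow_sum, ← Real.rpow_natCast]
  congr 1
  rw [eq_div_iff two_ne_zero]
  exact_mod_cast hsum

lemma abs_le_of_mem_polarBox_boxScale {d : ℕ} (hd : 1 ≤ d) {ρ η₀ : ℝ} (hρ : 1 ≤ ρ)
    (hη₀ : η₀ ∈ Set.Icc (0 : ℝ) 1) {y : Fin d → ℝ}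
    (hy : y ∈ polarBox d η₀ fun j => boxScale d * ρ ^ (j.1 + 1)) (k : Fin d) :
    |y k| ≤ ρ ^ d / 2 := by
  have hδ : ∀ j : Fin d, boxScale d * ρ ^ (j.1 + 1) ≤ boxScale d * ρ ^ d := fun j =>
    mul_le_mul_of_nonneg_left (pow_le_pow_right₀ hρ j.2) (boxScale_pos hd).le
  calc |y k| ≤ (d * 2 ^ d + 1) ^ d * (boxScale d * ρ ^ d) := abs_le_of_mem_polarBox hη₀ hδ hy k
    _ = (d * 2 ^ d + 1) ^ d * boxScale d * ρ ^ d := by ring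
    _ ≤ 1 / 2 * ρ ^ d := by gcongr; exact pow_mul_boxScale_le hd
    _ = ρ ^ d / 2 := by ring

lemma card_div_two_le_norm_sum_e_of_mem_polarBox {d : ℕ} (hd : 1 ≤ d) {ρ η₀ : ℝ} (hρ : 0 < ρ)
    (τ : Finset ℝ) (hτ : ∀ η ∈ τ, η ∈ Set.Icc η₀ (η₀ + ρ⁻¹)) {y : Fin d → ℝ}
    (hy : y ∈ polarBox d η₀ fun j => boxScale d * ρ ^ (j.1 + 1)) :
    (#τ : ℝ) / 2 ≤ ‖∑ η ∈ τ, e (momentCurve d η ⬝ᵥ y)‖ := by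
  have hshift : ∀ η, momentCurve d η ⬝ᵥ y = momentCurve d η₀ ⬝ᵥ y
      + momentCurve d (η - η₀) ⬝ᵥ (taylorShift d η₀ *ᵥ y) := fun η => by
    rw [← momentCurve_add_dotProduct, add_sub_cancel]
  rw [sum_congr rfl fun η _ => congrArg e (hshift η)]
  refine card_div_two_le_norm_sum_e τ _ _ fun η hη => ?_
  obtain ⟨h₁, h₂⟩ := hτ η hη
  have ht : |η - η₀| * ρ ≤ 1 := by
    rw [abs_of_nonneg (sub_nonneg.2 h₁), ← le_div_iff₀ hρ, one_div]
    linarith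
  exact (abs_momentCurve_dotProduct_le (boxScale_pos hd).le hρ.le ht fun j => abs_le.2
    (Set.mem_univ_pi.1 hy j)).trans (natCast_mul_boxScale_le hd)

lemma rpow_mul_le_integral_cube {d : ℕ} (hd : 1 ≤ d) {p ρ η₀ : ℝ} (hp : 0 ≤ p) (hρ : 1 ≤ ρ)
    (hη₀ : η₀ ∈ Set.Icc (0 : ℝ) 1) (τ : Finset ℝ) (hτ : ∀ η ∈ τ, η ∈ Set.Icc η₀ (η₀ + ρ⁻¹)) :
    ((#τ : ℝ) / 2) ^ p * ((2 * boxScale d) ^ d * ρ ^ ((d : ℝ) * (d + 1) / 2))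
      ≤ ∫ x in Set.univ.pi fun _ : Fin d => Set.Icc (0 : ℝ) (ρ ^ d),
          ‖∑ η ∈ τ, e (momentCurve d η ⬝ᵥ (x - fun _ => ρ ^ d / 2))‖ ^ p := by
  have hρ0 : 0 < ρ := one_pos.trans_le hρ
  set δ : Fin d → ℝ := fun j => boxScale d * ρ ^ (j.1 + 1)
  set center : Fin d → ℝ := fun _ => ρ ^ d / 2
  set S := (· - center) ⁻¹' polarBox d η₀ δ
  set f := fun x : Fin d → ℝ => ‖∑ η ∈ τ, e (momentCurve d η ⬝ᵥ (x - center))‖ ^ p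
  have hS_meas : MeasurableSet S :=
    (continuous_id.sub continuous_const).measurable (measurableSet_polarBox d η₀ δ)
  have hS_vol : volume S = ∏ j, ENNReal.ofReal (2 * δ j) := by
    rw [← volume_polarBox d η₀ δ]
    simp only [S, sub_eq_add_neg]
    exact measure_preimage_add_right _ _ _
  have hS_sub : S ⊆ Set.univ.pi fun _ => Set.Icc 0 (ρ ^ d) := fun x hx =>
    Set.mem_univ_pi.2 fun k => by
      have hk := abs_le.1 (abs_le_of_mem_polarBox_boxScale hd hρ hη₀ hx k)
      simp only [center, Pi.sub_apply] at hk
      constructor <;> linarith [hk.1, hk.2]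
  have hlow : ∀ x ∈ S, ((#τ : ℝ) / 2) ^ p ≤ f x := fun x hx =>
    Real.rpow_le_rpow (by positivity)
      (card_div_two_le_norm_sum_e_of_mem_polarBox hd hρ0 τ hτ hx) hp
  have hf_cont : Continuous f := by
    refine (continuous_finsetSum _ fun η _ => continuous_e.comp ?_).norm.rpow_const
      fun _ => Or.inr hp
    fun_prop
  have hf_int : IntegrableOn f (Set.univ.pi fun _ => Set.Icc 0 (ρ ^ d)) :=
    hf_cont.continuousOn.integrableOn_compact (isCompact_univ_pi fun _ => isCompact_Icc)
  calc ((#τ : ℝ) / 2) ^ p * ((2 * boxScale d) ^ d * ρ ^ ((d : ℝ) * (d + 1) / 2))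
      = volume.real S • ((#τ : ℝ) / 2) ^ p := by
        have hδ0 : ∀ j, 0 ≤ 2 * δ j := fun j => by have := boxScale_pos hd; positivity
        rw [measureReal_def, hS_vol, ENNReal.toReal_prod, smul_eq_mul, mul_comm]
        simp only [ENNReal.toReal_ofReal (hδ0 _), δ]
        rw [← prod_pow_succ_eq_rpow d ρ, ← Fin.prod_const, ← prod_mul_distrib]
        simp only [mul_assoc]
    _ ≤ ∫ x in S, f x := setIntegral_ge_of_const_le hS_meas
        (by rw [hS_vol]; exact ENNReal.prod_ne_top fun _ _ => ENNReal.ofReal_ne_top) hlow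
        (hf_int.mono_set hS_sub)
    _ ≤ ∫ x in Set.univ.pi fun _ => Set.Icc 0 (ρ ^ d), f x :=
        setIntegral_mono_set hf_int (ae_of_all _ fun _ => by positivity) hS_sub.eventuallyLE

def DecouplingInequality (d : ℕ) (p C R : ℝ) (P : Finset ℝ) : Prop :=
  ∀ a : ℝ → ℂ, (1 / R ^ (d : ℝ)) * ∫ x in Set.univ.pi fun _ : Fin d => Set.Icc (0 : ℝ) R,
      ‖∑ η ∈ P, a η * e (momentCurve d η ⬝ᵥ x)‖ ^ p ≤ C * Real.sqrt (∑ η ∈ P, ‖a η‖ ^ 2) ^ p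

lemma const_mul_rpow_le_of_testing {n T c C W p a b : ℝ} (hn : 0 < n) (hc : 0 < c) (hp : 0 < p)
    (hW : 0 ≤ W) (hT : c * n ^ (2 * a / p - 1) ≤ T)
    (htest : n ^ (-a) * ((T / 2) ^ p * (W * n ^ b)) ≤ C * √T ^ p) :
    c ^ (p / 2) * 2 ^ (-p) * W * n ^ (b - p / 2) ≤ C := by
  have hT0 : 0 < T := (by positivity : 0 < c * n ^ (2 * a / p - 1)).trans_le hT
  have hsqrt : √T ^ p = T ^ (p / 2) := by
    rw [Real.sqrt_eq_rpow, ← Real.rpow_mul hT0.le]; ring_nf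
  have hhalf : (T / 2) ^ p = T ^ (p / 2) * (T ^ (p / 2) * 2 ^ (-p)) := by
    rw [← mul_assoc, ← Real.rpow_add hT0, add_halves, Real.rpow_neg two_pos.le,
      Real.div_rpow hT0.le two_pos.le, div_eq_mul_inv]
  have hTpow : c ^ (p / 2) * n ^ (a - p / 2) ≤ T ^ (p / 2) := by
    calc c ^ (p / 2) * n ^ (a - p / 2) = (c * n ^ (2 * a / p - 1)) ^ (p / 2) := by
          rw [Real.mul_rpow hc.le (by positivity), ← Real.rpow_mul hn.le]
          congr 2
          field_simp
      _ ≤ T ^ (p / 2) := by gcongr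
  calc c ^ (p / 2) * 2 ^ (-p) * W * n ^ (b - p / 2)
      = n ^ (-a) * (c ^ (p / 2) * n ^ (a - p / 2)) * 2 ^ (-p) * W * n ^ b := by
        rw [Real.rpow_sub hn, Real.rpow_sub hn, Real.rpow_neg hn.le]
        field_simp
    _ ≤ n ^ (-a) * T ^ (p / 2) * 2 ^ (-p) * W * n ^ b := by gcongr
    _ ≤ C := by
        rw [hhalf, hsqrt] at htest
        refine le_of_mul_le_mul_left ?_ (Real.rpow_pos_of_pos hT0 (p / 2))
        linarith

lemma const_mul_rpow_le_of_decouplingInequality {d : ℕ} (hd : 1 ≤ d) {p c C : ℝ} (hp : 0 < p)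
    (hc : 0 < c) {N : ℕ} (hN : 1 ≤ N) {P : Finset ℝ} (hPloc : ∀ η ∈ P, η ∈ Set.Icc (0 : ℝ) 1)
    (hPcard : c * ((N : ℝ) ^ d) ^ (2 * (d : ℝ) / p) ≤ #P)
    (hdec : DecouplingInequality d p C ((N : ℝ) ^ d) P) :
    c ^ (p / 2) * 2 ^ (-p) * (2 * boxScale d) ^ d * (N : ℝ) ^ ((d : ℝ) * (d + 1) / 2 - p / 2)
      ≤ C := by
  have hn : (1 : ℝ) ≤ N := by exact_mod_cast hN
  have hn0 : (0 : ℝ) < N := one_pos.trans_le hn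
  have hpow : ∀ s : ℝ, ((N : ℝ) ^ d) ^ s = (N : ℝ) ^ ((d : ℝ) * s) := fun s => by
    rw [Real.rpow_natCast_mul hn0.le]
  obtain ⟨η₀, hη₀, hτcard⟩ := exists_Icc_card_filter_ge P hPloc (N := N) hN
  set τ := {η ∈ P | η ∈ Set.Icc η₀ (η₀ + 1 / N)}
  set center : Fin d → ℝ := fun _ => (N : ℝ) ^ d / 2
  -- The modulation moves the constructive interference from `0` to the centre of the cube.
  set a : ℝ → ℂ := fun η => if η ∈ τ then e (-(momentCurve d η ⬝ᵥ center)) else 0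
  have ha_in : ∀ η ∈ τ, a η = e (-(momentCurve d η ⬝ᵥ center)) := fun η hη => if_pos hη
  have ha_out : ∀ η ∈ P, η ∉ τ → ‖a η‖ ^ 2 = 0 ∧ ∀ x, a η * e (momentCurve d η ⬝ᵥ x) = 0 :=
    fun η _ hη => by simp [a, hη]
  have hl2 : ∑ η ∈ P, ‖a η‖ ^ 2 = #τ := by
    rw [← sum_subset (filter_subset _ P) fun η hη hητ => (ha_out η hη hητ).1]
    rw [sum_congr rfl fun η hη => by rw [ha_in η hη, norm_e, one_pow], sum_const, nsmul_one]
  have hsum : ∀ x, ∑ η ∈ P, a η * e (momentCurve d η ⬝ᵥ x)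
      = ∑ η ∈ τ, e (momentCurve d η ⬝ᵥ (x - center)) := fun x => by
    rw [← sum_subset (filter_subset _ P) fun η hη hητ => (ha_out η hη hητ).2 x]
    refine sum_congr rfl fun η hη => ?_
    rw [ha_in η hη, ← e_add, dotProduct_sub, neg_add_eq_sub]
  have hlow := rpow_mul_le_integral_cube hd hp.le hn hη₀ τ fun η hη => by
    simpa only [one_div] using (mem_filter.1 hη).2
  have htest := hdec a
  simp only [hsum, hl2] at htest
  refine const_mul_rpow_le_of_testing (T := #τ) (a := d * d) hn0 hc hp
    (by have := boxScale_pos hd; positivity) ?_ ?_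
  · calc c * (N : ℝ) ^ (2 * (d * d) / p - 1) = c * ((N : ℝ) ^ d) ^ (2 * (d : ℝ) / p) / N := by
          rw [hpow, Real.rpow_sub hn0, Real.rpow_one]; ring_nf
      _ ≤ #τ := (div_le_div_of_nonneg_right hPcard hn0.le).trans hτcard
  · rw [Real.rpow_neg hn0.le, ← hpow, ← one_div]
    exact (mul_le_mul_of_nonneg_left hlow (by positivity)).trans htest

theorem stmt18_general (d : ℕ) (hd : 1 ≤ d) (p c C R₀ : ℝ) (hp : 2 ≤ p)
    (hc : 0 < c) (hR₀ : 1 ≤ R₀)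
    (P : ℝ → Finset ℝ)
    (hPloc : ∀ R ≥ R₀, ∀ η ∈ P R, η ∈ Set.Icc (0:ℝ) 1)
    (hPcard : ∀ R ≥ R₀, c * R ^ (2*(d:ℝ)/p) ≤ ((P R).card : ℝ))
    (hdec : ∀ R ≥ R₀, ∀ a : ℝ → ℂ,
      (1 / R ^ (d:ℝ)) *
          ∫ x in Set.univ.pi fun _ : Fin d => Set.Icc (0:ℝ) R,
            ‖∑ η ∈ P R, a η * e (∑ i : Fin d, η ^ ((i:ℕ)+1) * x i)‖ ^ p
        ≤ C * Real.sqrt (∑ η ∈ P R, ‖a η‖ ^ 2) ^ p) :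
    (d:ℝ) * ((d:ℝ) + 1) ≤ p := by
  by_contra! hlt
  set K := c ^ (p / 2) * 2 ^ (-p) * (2 * boxScale d) ^ d
  have hK : 0 < K := by have := boxScale_pos hd; positivity
  have hbound : ∀ N : ℕ, R₀ ≤ N → K * (N : ℝ) ^ ((d : ℝ) * (d + 1) / 2 - p / 2) ≤ C := by
    intro N hN
    have hN1 : 1 ≤ N := by exact_mod_cast hR₀.trans hN
    have hR : (N : ℝ) ^ d ≥ R₀ := hN.trans (le_self_pow₀ (by exact_mod_cast hN1) (by omega))
    exact const_mul_rpow_le_of_decouplingInequality hd (by linarith) hc hN1 (hPloc _ hR)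
      (hPcard _ hR) (hdec _ hR)
  have hgrowth : Tendsto (fun N : ℕ => K * (N : ℝ) ^ ((d : ℝ) * (d + 1) / 2 - p / 2)) atTop atTop :=
    ((tendsto_rpow_atTop (by linarith)).comp tendsto_natCast_atTop_atTop).const_mul_atTop hK
  obtain ⟨N, hNC, hNR₀⟩ := ((hgrowth.eventually_gt_atTop C).and
    (tendsto_natCast_atTop_atTop.eventually_ge_atTop R₀)).exists
  exact (hbound N hNR₀).not_gt hNC

theorem stmt18 (d : ℕ) (hd : 1 ≤ d) (p c C R₀ : ℝ) (hp : 2 ≤ p)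
    (hc : 0 < c) (hC : 0 < C) (hR₀ : 1 ≤ R₀)
    (P : ℝ → Finset ℝ)
    (hPloc : ∀ R ≥ R₀, ∀ η ∈ P R, η ∈ Set.Icc (0:ℝ) 1)
    (hPcard : ∀ R ≥ R₀, c * R ^ (2*(d:ℝ)/p) ≤ ((P R).card : ℝ))
    (hdec : ∀ R ≥ R₀, ∀ a : ℝ → ℂ,
      (1 / R ^ (d:ℝ)) *
          ∫ x in Set.univ.pi fun _ : Fin d => Set.Icc (0:ℝ) R,
            ‖∑ η ∈ P R, a η * e (∑ i : Fin d, η ^ ((i:ℕ)+1) * x i)‖ ^ p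
        ≤ C * Real.sqrt (∑ η ∈ P R, ‖a η‖ ^ 2) ^ p) :
    (d:ℝ) * ((d:ℝ) + 1) ≤ p :=
  stmt18_general d hd p c C R₀ hp hc hR₀ P hPloc hPcard hdec
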